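/- Let B be an n×n symmetric matrix over a field F. If every quasi-principal minor of B of order k is zero (for some k with 1 ≤ k ≤ n), then for every j with k ≤ j ≤ n, every quasi-principal minor of B of order j is zero. -/

import Mathlib

open Matrix

/-- The minor of a square matrix `B` lying in the rows indexed by `α` and the columns
indexed by `β` (each listed in increasing order); junk value `0` if `α.card ≠ β.card`. -/
def qMinor {R : Type*} [CommRing R] {m : Type*} [Fintype m] [LinearOrder m]
    (B : Matrix m m R) (α β : Finset m) : R :=
  if h : β.card = α.card then
    (Matrix.of fun i j : Fin α.card =>
      B (α.orderEmbOfFin rfl i) (β.orderEmbOfFin h j)).det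
  else 0

/-- `α` and `β` index a quasi-principal submatrix of order `k`, i.e.
`|α| = |β| = k` and `k - 1 ≤ |α ∩ β| (≤ k)`. -/
def IsQPPair {m : Type*} [DecidableEq m] (k : ℕ) (α β : Finset m) : Prop :=
  α.card = k ∧ β.card = k ∧ k - 1 ≤ (α ∩ β).card

/-- All quasi-principal minors of `B` of order `k` are nonzero. -/
def QPAllNonzero {R : Type*} [CommRing R] {m : Type*} [Fintype m] [LinearOrder m]
    (B : Matrix m m R) (k : ℕ) : Prop :=
  ∀ α β : Finset m, IsQPPair k α β → qMinor B α β ≠ 0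

/-- All quasi-principal minors of `B` of order `k` are zero. -/
def QPAllZero {R : Type*} [CommRing R] {m : Type*} [Fintype m] [LinearOrder m]
    (B : Matrix m m R) (k : ℕ) : Prop :=
  ∀ α β : Finset m, IsQPPair k α β → qMinor B α β = 0

/-- The three possible letters of a qpr-sequence. -/
inductive QPR : Type
  | A
  | S
  | N
deriving DecidableEq

open Classical in
/-- The letter of the qpr-sequence of `B` corresponding to order `k`:
`A` if all quasi-principal minors of order `k` are nonzero, `N` if all are zero,
and `S` otherwise. -/
noncomputable def qprEntry {R : Type*} [CommRing R] {m : Type*} [Fintype m] [LinearOrder m]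
    (B : Matrix m m R) (k : ℕ) : QPR :=
  if QPAllNonzero B k then QPR.A
  else if QPAllZero B k then QPR.N
  else QPR.S

/-- A sequence of letters `q 0, …, q (n-1)` (standing for `q_1 ⋯ q_n`) is attainable
over `F` if it is the qpr-sequence of an `n × n` symmetric matrix over `F`. -/
def Attainable (F : Type*) [Field F] {n : ℕ} (q : Fin n → QPR) : Prop :=
  ∃ B : Matrix (Fin n) (Fin n) F, B.IsSymm ∧ ∀ k : Fin n, qprEntry B ((k : ℕ) + 1) = q k

/-- The Schur complement `B/B[γ] = B[γᶜ] - B[γᶜ, γ] B[γ]⁻¹ B[γ, γᶜ]`,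
with rows and columns indexed by `γᶜ` (indexing inherited from `B`). -/
noncomputable def schurCompl {R : Type*} [CommRing R] {n : ℕ}
    (B : Matrix (Fin n) (Fin n) R) (γ : Finset (Fin n)) :
    Matrix ↥(γᶜ) ↥(γᶜ) R :=
  B.submatrix (fun i : ↥(γᶜ) => (i : Fin n)) (fun j : ↥(γᶜ) => (j : Fin n)) -
    B.submatrix (fun i : ↥(γᶜ) => (i : Fin n)) (fun j : ↥γ => (j : Fin n)) *
      (B.submatrix (fun i : ↥γ => (i : Fin n)) fun j : ↥γ => (j : Fin n))⁻¹ *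
      B.submatrix (fun i : ↥γ => (i : Fin n)) fun j : ↥(γᶜ) => (j : Fin n)

/-- The `(m+1) × (m+1)` matrix with block form `[[A, x], [yᵀ, b]]`. -/
def borderMat {R : Type*} [CommRing R] {m : ℕ} (A : Matrix (Fin m) (Fin m) R)
    (x y : Fin m → R) (b : R) : Matrix (Fin (m + 1)) (Fin (m + 1)) R :=
  Matrix.of fun i j =>
    if hi : (i : ℕ) < m then
      if hj : (j : ℕ) < m then A ⟨i, hi⟩ ⟨j, hj⟩ else x ⟨i, hi⟩
    else
      if hj : (j : ℕ) < m then y ⟨j, hj⟩ else b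

/-!
Expanding a quasi-principal minor `det B[α, β]` of order `c + 1` along a row `i ∈ α` with
`α \ {i} ⊆ β` (a row outside `β`, or any row if `α = β`) writes it as a combination of the
minors `det B[α \ {i}, β \ {q}]`, which are again quasi-principal, of order `c`. Hence the
vanishing of all quasi-principal minors of one order propagates to every higher order.
-/

section QuasiPrincipal

variable {R : Type*} [CommRing R] {m : Type*} [Fintype m] [LinearOrder m]

lemma qMinor_eq_det_of_strictMono (B : Matrix m m R) {α β : Finset m} {c : ℕ}
    (hα : α.card = c) (hβ : β.card = c) {f g : Fin c → m} (hf : StrictMono f)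
    (hg : StrictMono g) (hfα : ∀ x, f x ∈ α) (hgβ : ∀ x, g x ∈ β) :
    qMinor B α β = (Matrix.of fun i j : Fin c => B (f i) (g j)).det := by
  subst hα
  rw [qMinor, dif_pos hβ, Finset.orderEmbOfFin_unique rfl hfα hf,
    Finset.orderEmbOfFin_unique hβ hgβ hg]

lemma qMinor_eq_zero_of_forall_erase (B : Matrix m m R) {α β : Finset m} {c : ℕ}
    (hα : α.card = c + 1) (hβ : β.card = c + 1) {i : m} (hi : i ∈ α)
    (hz : ∀ q ∈ β, qMinor B (α.erase i) (β.erase q) = 0) :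
    qMinor B α β = 0 := by
  set f := α.orderEmbOfFin hα
  set g := β.orderEmbOfFin hβ
  rw [qMinor_eq_det_of_strictMono B hα hβ f.strictMono g.strictMono
    (α.orderEmbOfFin_mem hα) (β.orderEmbOfFin_mem hβ)]
  obtain ⟨p, rfl⟩ : i ∈ Set.range f := by
    rw [Finset.range_orderEmbOfFin]
    exact hi
  rw [Matrix.det_succ_row _ p]
  refine Finset.sum_eq_zero fun q _ => ?_
  have hcα : (α.erase (f p)).card = c := by rw [Finset.card_erase_of_mem hi, hα]; rfl
  have hcβ : (β.erase (g q)).card = c := by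
    rw [Finset.card_erase_of_mem (β.orderEmbOfFin_mem hβ q), hβ]; rfl
  have hminor : ((Matrix.of fun a b => B (f a) (g b)).submatrix
      p.succAbove q.succAbove).det = qMinor B (α.erase (f p)) (β.erase (g q)) :=
    (qMinor_eq_det_of_strictMono B hcα hcβ
      (f.strictMono.comp (Fin.strictMono_succAbove p))
      (g.strictMono.comp (Fin.strictMono_succAbove q))
      (fun x => Finset.mem_erase.2
        ⟨f.injective.ne (Fin.succAbove_ne p x), α.orderEmbOfFin_mem hα _⟩)
      (fun x => Finset.mem_erase.2
        ⟨g.injective.ne (Fin.succAbove_ne q x), β.orderEmbOfFin_mem hβ _⟩)).symm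
  rw [hminor, hz (g q) (β.orderEmbOfFin_mem hβ q), mul_zero]

end QuasiPrincipal

section Pairs

variable {m : Type*} [DecidableEq m]

lemma IsQPPair.exists_erase_subset {c : ℕ} {α β : Finset m} (h : IsQPPair (c + 1) α β) :
    ∃ i ∈ α, α.erase i ⊆ β := by
  obtain ⟨hα, -, hint⟩ := h
  obtain ⟨s, hsαβ, hs⟩ := Finset.exists_subset_card_eq (s := α ∩ β) (n := c) (by omega)
  have hsα : s ⊆ α := hsαβ.trans Finset.inter_subset_left
  obtain ⟨i, hi⟩ : ∃ i, α \ s = {i} :=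
    Finset.card_eq_one.1 (by rw [Finset.card_sdiff_of_subset hsα]; omega)
  have hiα : i ∈ α := (Finset.mem_sdiff.1 (hi ▸ Finset.mem_singleton_self i)).1
  refine ⟨i, hiα, fun x hx => ?_⟩
  obtain ⟨hxi, hxα⟩ := Finset.mem_erase.1 hx
  have hxs : x ∈ s := by
    by_contra hxs
    exact hxi (Finset.mem_singleton.1 (hi ▸ Finset.mem_sdiff.2 ⟨hxα, hxs⟩))
  exact (Finset.mem_inter.1 (hsαβ hxs)).2

lemma IsQPPair.erase_erase {c : ℕ} {α β : Finset m} {i q : m} (h : IsQPPair (c + 1) α β)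
    (hi : i ∈ α) (hq : q ∈ β) (hαβ : α.erase i ⊆ β) :
    IsQPPair c (α.erase i) (β.erase q) := by
  obtain ⟨hα, hβ, -⟩ := h
  have hcα : (α.erase i).card = c := by rw [Finset.card_erase_of_mem hi, hα]; rfl
  have hss : (α.erase i).erase q ⊆ α.erase i ∩ β.erase q := fun x hx => by
    obtain ⟨hxq, hx⟩ := Finset.mem_erase.1 hx
    exact Finset.mem_inter.2 ⟨hx, Finset.mem_erase.2 ⟨hxq, hαβ hx⟩⟩
  refine ⟨hcα, by rw [Finset.card_erase_of_mem hq, hβ]; rfl, ?_⟩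
  calc c - 1 = (α.erase i).card - 1 := by rw [hcα]
    _ ≤ ((α.erase i).erase q).card := Finset.pred_card_le_card_erase
    _ ≤ (α.erase i ∩ β.erase q).card := Finset.card_le_card hss

end Pairs

section Propagation

variable {R : Type*} [CommRing R] {m : Type*} [Fintype m] [LinearOrder m]

lemma QPAllZero.succ {B : Matrix m m R} {c : ℕ} (h : QPAllZero B c) : QPAllZero B (c + 1) := by
  intro α β hαβ
  obtain ⟨i, hi, hsub⟩ := hαβ.exists_erase_subset
  exact qMinor_eq_zero_of_forall_erase B hαβ.1 hαβ.2.1 hi fun q hq =>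
    h _ _ (hαβ.erase_erase hi hq hsub)

lemma QPAllZero.mono {B : Matrix m m R} {k j : ℕ} (h : QPAllZero B k) (hkj : k ≤ j) :
    QPAllZero B j := by
  induction j, hkj using Nat.le_induction with
  | base => exact h
  | succ j _ ih => exact ih.succ

end Propagation

theorem stmt_0_general {F : Type*} [Field F] {n : ℕ} (B : Matrix (Fin n) (Fin n) F)
    (k : ℕ) (h : QPAllZero B k) :
    ∀ j : ℕ, k ≤ j → j ≤ n → QPAllZero B j :=
  fun _ hkj _ => h.mono hkj

/-- the `N` Theorem: if every quasi-principal minor of a symmetric matrix `B`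
of order `k` is zero (`1 ≤ k ≤ n`), then for all `j` with `k ≤ j ≤ n`, every
quasi-principal minor of `B` of order `j` is zero. -/
theorem stmt_0 {F : Type*} [Field F] {n : ℕ} (B : Matrix (Fin n) (Fin n) F)
    (hB : B.IsSymm) (k : ℕ) (hk1 : 1 ≤ k) (hkn : k ≤ n) (h : QPAllZero B k) :
    ∀ j : ℕ, k ≤ j → j ≤ n → QPAllZero B j :=
  stmt_0_general B k h
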